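/- Let G be a groupoid, K a subgroup of G (i.e., a subgroupoid all of whose elements share a common object), and H a normal subgroupoid of G such that H ∩ K consists only of the identity of K. Suppose K acts on H by conjugation ω. Then the subgroupoid HK of G is isomorphic to the semidirect product H ×_ω K. -/
import Mathlib


universe u v

/-- A groupoid in the axiomatic sense: a set with a partial multiplication
(`D g h` means the product `gh` is defined, `mul` is a total function whose
value is only meaningful when the product is defined) and a total inversion. -/
class Gpd (G : Type u) where
  mul : G → G → G
  inv : G → G
  D : G → G → Prop
  inv_left : ∀ g, D (inv g) g
  inv_right : ∀ g, D g (inv g)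
  D_iff : ∀ g h, D g h ↔ mul (inv g) g = mul h (inv h)
  assoc : ∀ g h k, D g h → D h k →
    D (mul g h) k ∧ D g (mul h k) ∧ mul (mul g h) k = mul g (mul h k)
  inv_cancel_left : ∀ g h, D g h → mul (inv g) (mul g h) = h
  inv_cancel_right : ∀ g h, D g h → mul (mul g h) (inv h) = g

namespace Gpd

variable {G : Type u} [Gpd G]

/-- The domain `d(g) = g⁻¹g`. -/
def d (g : G) : G := mul (inv g) g

/-- The range `r(g) = gg⁻¹`. -/
def r (g : G) : G := mul g (inv g)

/-- Identities (= idempotents) of the groupoid. -/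
def IsId (e : G) : Prop := D e e ∧ mul e e = e

/-- The set `G₀` of identities of `G`. -/
def objs (G : Type u) [Gpd G] : Set G := {e | IsId e}

/-- Subgroupoid: a nonempty subset closed under inverses and defined products. -/
def IsSubgroupoid (H : Set G) : Prop :=
  H.Nonempty ∧ (∀ h ∈ H, inv h ∈ H) ∧
    ∀ g h : G, g ∈ H → h ∈ H → D g h → mul g h ∈ H

/-- Wide subgroupoid: a subgroupoid containing all identities of `G`. -/
def IsWide (H : Set G) : Prop := IsSubgroupoid H ∧ objs G ⊆ H

/-- Normal subgroupoid: wide and closed under defined conjugations `g⁻¹hg`. -/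
def IsNormal (H : Set G) : Prop :=
  IsWide H ∧ ∀ g h : G, h ∈ H → D (inv g) h → D (mul (inv g) h) g →
    mul (mul (inv g) h) g ∈ H

end Gpd

namespace Gpd

variable {G : Type u} [Gpd G]

lemma d_eq_r_of_D {g h : G} (hD : D g h) : d g = r h := (D_iff g h).mp hD

lemma D_of_d_eq_r {g h : G} (h' : d g = r h) : D g h := (D_iff g h).mpr h'

lemma d_inv (g : G) : d (inv g) = r g := d_eq_r_of_D (inv_left g)

lemma r_inv (g : G) : r (inv g) = d g := (d_eq_r_of_D (inv_right g)).symm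

lemma mul_d_inv (g : G) : mul (d g) (inv g) = inv g :=
  inv_cancel_right (inv g) g (inv_left g)

lemma inv_inv (g : G) : inv (inv g) = g := by
  have h1 : mul (r g) (inv (inv g)) = g := inv_cancel_right g (inv g) (inv_right g)
  have h2 : mul (d (inv g)) (inv (inv g)) = inv (inv g) := mul_d_inv (inv g)
  rw [d_inv] at h2
  exact h2.symm.trans h1

lemma mul_d (g : G) : mul g (d g) = g := by
  have h := inv_cancel_left (inv g) g (inv_left g)
  rwa [inv_inv] at h

lemma r_mul_self (g : G) : mul (r g) g = g := by
  have h := (assoc g (inv g) g (inv_right g) (inv_left g)).2.2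
  exact h.trans (mul_d g)

lemma mul_of_d_eq {g e : G} (h : d g = e) : mul g e = g := h ▸ mul_d g

lemma mul_of_r_eq {g e : G} (h : r g = e) : mul e g = g := h ▸ r_mul_self g

lemma d_mul {g h : G} (hD : D g h) : d (mul g h) = d h := by
  have h1 : D (mul g h) (inv h) := (assoc g h (inv h) hD (inv_right h)).1
  have h2 := d_eq_r_of_D h1
  rwa [r_inv] at h2

lemma r_mul {g h : G} (hD : D g h) : r (mul g h) = r g := by
  have h1 : D (inv g) (mul g h) := (assoc (inv g) g h (inv_left g) hD).2.1
  have h2 := d_eq_r_of_D h1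
  rw [d_inv] at h2
  exact h2.symm

lemma d_of_isId {e : G} (he : IsId e) : d e = e := by
  have h := inv_cancel_left e e he.1
  rwa [he.2] at h

lemma r_of_isId {e : G} (he : IsId e) : r e = e := by
  have h := inv_cancel_right e e he.1
  rwa [he.2] at h

end Gpd

open Gpd

/-- if `K` is a subgroup of `G` (all elements sharing the object `e`),
`H` is normal with `H ∩ K = {e}`, then `HK ≅ H ×_ω K` where `ω` is conjugation:
the map `(h,k) ↦ hk` is injective (and surjects onto `HK` by definition) and sends
the semidirect-product composition to the composition of `G`. -/
theorem hk_iso_semidirect {G : Type u} [Gpd G] (H K : Set G) (e : G)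
    (hK : IsSubgroupoid K) (he : e ∈ objs G)
    (hKe : ∀ k ∈ K, d k = e ∧ r k = e)
    (hH : IsNormal H)
    (hHK : H ∩ K = {e}) :
    (∀ h₁ k₁ h₂ k₂ : G, h₁ ∈ H → k₁ ∈ K → Gpd.D h₁ k₁ → h₂ ∈ H → k₂ ∈ K →
        Gpd.D h₂ k₂ → Gpd.mul h₁ k₁ = Gpd.mul h₂ k₂ → h₁ = h₂ ∧ k₁ = k₂) ∧
    (∀ h₁ k₁ h₂ k₂ : G, h₁ ∈ H → k₁ ∈ K → Gpd.D h₁ k₁ → h₂ ∈ H → k₂ ∈ K →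
        Gpd.D h₂ k₂ → Gpd.D (Gpd.mul h₁ k₁) (Gpd.mul h₂ k₂) →
        Gpd.D k₁ h₂ ∧ Gpd.D (Gpd.mul k₁ h₂) (Gpd.inv k₁) ∧
        Gpd.mul (Gpd.mul k₁ h₂) (Gpd.inv k₁) ∈ H ∧
        Gpd.D k₁ k₂ ∧ Gpd.mul k₁ k₂ ∈ K ∧
        Gpd.D h₁ (Gpd.mul (Gpd.mul k₁ h₂) (Gpd.inv k₁)) ∧
        Gpd.mul h₁ (Gpd.mul (Gpd.mul k₁ h₂) (Gpd.inv k₁)) ∈ H ∧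
        Gpd.D (Gpd.mul h₁ (Gpd.mul (Gpd.mul k₁ h₂) (Gpd.inv k₁))) (Gpd.mul k₁ k₂) ∧
        Gpd.mul (Gpd.mul h₁ k₁) (Gpd.mul h₂ k₂) =
          Gpd.mul (Gpd.mul h₁ (Gpd.mul (Gpd.mul k₁ h₂) (Gpd.inv k₁)))
            (Gpd.mul k₁ k₂)) := by
  obtain ⟨hKne, hKinv, hKmul⟩ := hK
  obtain ⟨⟨⟨hHne, hHinv, hHmul⟩, hHwide⟩, hHnorm⟩ := hH
  have hde : d e = e := d_of_isId he
  have hre : r e = e := r_of_isId he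
  constructor
  · intro h₁ k₁ h₂ k₂ hh₁ hk₁ hD₁ hh₂ hk₂ hD₂ heq
    have hd1 : d h₁ = e := (d_eq_r_of_D hD₁).trans (hKe k₁ hk₁).2
    have hd2 : d h₂ = e := (d_eq_r_of_D hD₂).trans (hKe k₂ hk₂).2
    have hr12 : r h₁ = r h₂ := by
      have := (r_mul hD₁).symm.trans (heq ▸ r_mul hD₂)
      exact this
    have Dinv : D (inv h₂) h₁ := D_of_d_eq_r (by rw [d_inv, hr12])
    obtain ⟨A1, _, A3⟩ := assoc (inv h₂) h₁ k₁ Dinv hD₁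
    set a := mul (inv h₂) h₁ with ha
    have hak : mul a k₁ = k₂ := by
      rw [A3, heq]; exact inv_cancel_left h₂ k₂ hD₂
    have haH : a ∈ H := hHmul _ _ (hHinv _ hh₂) hh₁ Dinv
    have haK : a ∈ K := by
      have h5 : mul (mul a k₁) (inv k₁) = a := inv_cancel_right a k₁ A1
      rw [hak] at h5
      have Dk : D k₂ (inv k₁) := D_of_d_eq_r (by rw [r_inv, (hKe k₁ hk₁).1, (hKe k₂ hk₂).1])
      rw [← h5]; exact hKmul _ _ hk₂ (hKinv _ hk₁) Dk
    have hae : a = e := by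
      have : a ∈ H ∩ K := ⟨haH, haK⟩
      rw [hHK] at this; exact this
    have hh : h₁ = h₂ := by
      have h6 := inv_cancel_left (inv h₂) h₁ Dinv
      rw [Gpd.inv_inv, ← ha, hae] at h6
      rw [← h6]
      exact mul_of_d_eq hd2
    refine ⟨hh, ?_⟩
    rw [← hak, hae]
    exact (mul_of_r_eq (hKe k₁ hk₁).2).symm
  · intro h₁ k₁ h₂ k₂ hh₁ hk₁ hD₁ hh₂ hk₂ hD₂ hDprod
    have hd1 : d h₁ = r k₁ := d_eq_r_of_D hD₁
    have hd2 : d h₂ = r k₂ := d_eq_r_of_D hD₂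
    have hdk1 : d k₁ = e := (hKe k₁ hk₁).1
    have hrk1 : r k₁ = e := (hKe k₁ hk₁).2
    have hdk2 : d k₂ = e := (hKe k₂ hk₂).1
    have hrk2 : r k₂ = e := (hKe k₂ hk₂).2
    have hdr : d (mul h₁ k₁) = r (mul h₂ k₂) := d_eq_r_of_D hDprod
    rw [d_mul hD₁, r_mul hD₂] at hdr
    -- hdr : d k₁ = r h₂
    have Dkh : D k₁ h₂ := D_of_d_eq_r hdr
    have Dbinv : D (mul k₁ h₂) (inv k₁) :=
      D_of_d_eq_r (by rw [d_mul Dkh, r_inv, hd2, hrk2, hdk1])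
    have hcH : mul (mul k₁ h₂) (inv k₁) ∈ H := by
      have := hHnorm (inv k₁) h₂ hh₂ (by rwa [Gpd.inv_inv]) (by rwa [Gpd.inv_inv])
      rwa [Gpd.inv_inv] at this
    set c := mul (mul k₁ h₂) (inv k₁) with hc
    have Dk12 : D k₁ k₂ := D_of_d_eq_r (by rw [hdk1, hrk2])
    have hk12K : mul k₁ k₂ ∈ K := hKmul _ _ hk₁ hk₂ Dk12
    have hrc : r c = r k₁ := by
      rw [hc, r_mul Dbinv, r_mul Dkh]
    have hdc : d c = r k₁ := by
      rw [hc, d_mul Dbinv]; exact d_inv k₁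
    have Dhc : D h₁ c := D_of_d_eq_r (by rw [hd1, hrc])
    have hhcH : mul h₁ c ∈ H := hHmul _ _ hh₁ hcH Dhc
    have Dfin : D (mul h₁ c) (mul k₁ k₂) :=
      D_of_d_eq_r (by rw [d_mul Dhc, hdc, r_mul Dk12])
    refine ⟨Dkh, Dbinv, hcH, Dk12, hk12K, Dhc, hhcH, Dfin, ?_⟩
    -- final equation
    have hck : mul c k₁ = mul k₁ h₂ := by
      have Dck : D c k₁ := D_of_d_eq_r (by rw [hdc, hrk1])
      have h7 := (assoc (mul k₁ h₂) (inv k₁) k₁ Dbinv (inv_left k₁)).2.2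
      rw [← hc] at h7
      rw [h7]
      exact mul_of_d_eq (e := d k₁) (by rw [d_mul Dkh, hd2, hrk2, hdk1])
    have Dck : D c k₁ := D_of_d_eq_r (by rw [hdc, hrk1])
    have Dck2 : D c (mul k₁ k₂) := D_of_d_eq_r (by rw [hdc, r_mul Dk12])
    have h8 := (assoc h₁ c (mul k₁ k₂) Dhc Dck2).2.2
    have h9 := (assoc c k₁ k₂ Dck Dk12).2.2
    have Dh2k2' : D h₂ k₂ := hD₂
    have h10 := (assoc k₁ h₂ k₂ Dkh hD₂).2.2
    have Dkprod : D k₁ (mul h₂ k₂) := (assoc k₁ h₂ k₂ Dkh hD₂).2.1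
    have h11 := (assoc h₁ k₁ (mul h₂ k₂) hD₁ Dkprod).2.2
    rw [h8, ← h9, hck, h10, ← h11]
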